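/- Under the setup of the previous lemma, if u ∉ S ∪ {v} is adjacent in G to w, then u belongs to the vertex set of every copy H_{vw} of K_{p_2} ∪ ... ∪ K_{p_t} found in G[V(G) \ (S ∪ {v,w})] arising from the saturation of the edge vw; i.e., any vertex of V(G) \ (S ∪ {v}) adjacent to w must lie in V(H_{vw}). -/

import Mathlib

open SimpleGraph Finset

/-- `H` is a subgraph of `G` (up to isomorphism): an injective homomorphism exists. -/
def IsSubgraphOf {α β : Type*} (H : SimpleGraph α) (G : SimpleGraph β) : Prop :=
  ∃ f : α → β, Function.Injective f ∧ ∀ a b, H.Adj a b → G.Adj (f a) (f b)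

/-- `G` is `H`-saturated. -/
def IsSat {α β : Type*} (G : SimpleGraph α) (H : SimpleGraph β) : Prop :=
  ¬ IsSubgraphOf H G ∧
    ∀ u v : α, u ≠ v → ¬ G.Adj u v →
      IsSubgraphOf H (G ⊔ SimpleGraph.fromEdgeSet {s(u, v)})

/-- First position of block `i` (for `2 ≤ i`) in `H(n; p₁, …, p_t)`. -/
def blockStart (p : ℕ → ℕ) (i : ℕ) : ℕ :=
  (p 1 - 2) + ∑ j ∈ Finset.Ico 2 i, (p j + 1)

def inBlock (p : ℕ → ℕ) (i : ℕ) (a : ℕ) : Prop :=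
  blockStart p i ≤ a ∧ a < blockStart p i + (p i + 1)

/-- `H(n; p₁, …, p_t) = K_{p₁-2} ∨ (K_{p₂+1} ∪ ⋯ ∪ K_{p_t+1} ∪ I_m)`. -/
def Hgraph (n t : ℕ) (p : ℕ → ℕ) : SimpleGraph (Fin n) :=
  SimpleGraph.fromRel (fun u v =>
    (u : ℕ) < p 1 - 2 ∨ ∃ i, 2 ≤ i ∧ i ≤ t ∧ inBlock p i (u : ℕ) ∧ inBlock p i (v : ℕ))

/-- The disjoint union `K_{p₁} ∪ K_{p₂} ∪ ⋯ ∪ K_{p_t}`. -/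
def cliqueUnion (t : ℕ) (p : ℕ → ℕ) :
    SimpleGraph (Σ i : Fin t, Fin (p ((i : ℕ) + 1))) where
  Adj a b := a ≠ b ∧ a.1 = b.1
  symm := ⟨fun a b h => ⟨h.1.symm, h.2.symm⟩⟩
  loopless := ⟨fun a h => h.1 rfl⟩

/-- The disjoint union `K_{p₂} ∪ ⋯ ∪ K_{p_t}`. -/
def cliqueUnionTail (t : ℕ) (p : ℕ → ℕ) :
    SimpleGraph (Σ i : Fin (t - 1), Fin (p ((i : ℕ) + 2))) where
  Adj a b := a ≠ b ∧ a.1 = b.1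
  symm := ⟨fun a b h => ⟨h.1.symm, h.2.symm⟩⟩
  loopless := ⟨fun a h => h.1 rfl⟩
/-!
Adding a non-edge `vx` to `G` creates a copy of `K_{p₁} ∪ ⋯ ∪ K_{p_t}` that must use `vx`; since
`p₁` is the smallest clique size, the rest of the clique through `vx` contains a `(p₁ - 2)`-clique
of common neighbours of `v` and `x`. So every vertex outside `N[v]` has at least `p₁ - 2`
neighbours in `N(v)`, and double counting the edges against `e(G) ≤ e(H(n; p₁, …, p_t))` forces
`d(v) = p₁ - 2`. Then `N(v)` is itself a clique joined to both `u` and `w`, so `N(v) ∪ {u, w}` is a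
`K_{p₁}`, which together with `H_{vw}` would embed `K_{p₁} ∪ ⋯ ∪ K_{p_t}` into `G` unless
`u ∈ V(H_{vw})`.
-/

lemma Sigma.fin_ext {ι : Type*} {k : ι → ℕ} {a b : Σ i, Fin (k i)} (h₁ : a.1 = b.1)
    (h₂ : (a.2 : ℕ) = b.2) : a = b :=
  Sigma.ext h₁ ((Fin.heq_ext_iff (congrArg k h₁)).2 h₂)

namespace SimpleGraph

variable {α V : Type*} {G : SimpleGraph V} {x y : V} {t : ℕ} {p : ℕ → ℕ}

lemma ncard_neighborSet_eq_degree [Fintype V] [DecidableRel G.Adj] (v : V) :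
    (G.neighborSet v).ncard = G.degree v := by
  rw [Set.ncard_eq_toFinset_card', Set.toFinset_card, card_neighborSet_eq_degree]

lemma sum_degrees_eq_two_mul_ncard_edgeSet [Fintype V] [DecidableRel G.Adj] :
    ∑ v, G.degree v = 2 * G.edgeSet.ncard := by
  rw [sum_degrees_eq_twice_card_edges, ← coe_edgeFinset, Set.ncard_coe_finset]

lemma adj_of_sup_edge_adj {a b : V} (h : (G ⊔ edge x y).Adj a b) (hax : a ≠ x) (hay : a ≠ y) :
    G.Adj a b := by
  simpa [edge_adj, hax, hay] using h

lemma exists_adj_map_eq_of_not_map_adj {H : SimpleGraph α} {g : α → V}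
    (hg : ∀ a b, H.Adj a b → (G ⊔ edge x y).Adj (g a) (g b))
    (hG : ¬ ∀ a b, H.Adj a b → G.Adj (g a) (g b)) :
    ∃ a b, H.Adj a b ∧ g a = x ∧ g b = y := by
  simp only [not_forall] at hG
  obtain ⟨a, b, hab, hnot⟩ := hG
  have := hg a b hab
  simp only [sup_adj, edge_adj, hnot, false_or] at this
  rcases this.1 with ⟨ha, hb⟩ | ⟨ha, hb⟩
  · exact ⟨a, b, hab, ha, hb⟩
  · exact ⟨b, a, hab.symm, hb, ha⟩

lemma exists_isNClique_subset_commonNeighbors (hp : ∀ i : Fin t, p 1 ≤ p (i + 1))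
    (hsat : IsSat G (cliqueUnion t p)) (hxy : x ≠ y) (hadj : ¬ G.Adj x y) :
    ∃ B : Finset V, G.IsNClique (p 1 - 2) B ∧ ↑B ⊆ G.commonNeighbors x y := by
  classical
  obtain ⟨g, hg, hgG⟩ := hsat.2 x y hxy hadj
  obtain ⟨a, b, ⟨hab, hblock⟩, rfl, rfl⟩ :=
    exists_adj_map_eq_of_not_map_adj hgG fun h => hsat.1 ⟨g, hg, h⟩
  -- the other vertices of the block whose edge `ab` is mapped onto the new edge `xy`
  set R := univ.map (Function.Embedding.sigmaMk (β := fun i : Fin t => Fin (p (i + 1))) a.1)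
    \ {a, b} with hR
  have hmemR : ∀ e ∈ R, e ≠ a ∧ e ≠ b ∧ e.1 = a.1 := by
    intro e he
    simp only [hR, mem_sdiff, mem_map, mem_univ, true_and, Function.Embedding.sigmaMk_apply,
      mem_insert, mem_singleton, not_or] at he
    obtain ⟨⟨j, rfl⟩, hea, heb⟩ := he
    exact ⟨hea, heb, rfl⟩
  have hGadj : ∀ e ∈ R, ∀ c, c ≠ e → c.1 = a.1 → G.Adj (g e) (g c) := fun e he c hce hc =>
    adj_of_sup_edge_adj (hgG e c ⟨hce.symm, (hmemR e he).2.2.trans hc.symm⟩)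
      (hg.ne (hmemR e he).1) (hg.ne (hmemR e he).2.1)
  have hcard : p 1 - 2 ≤ #(R.image g) := by
    rw [card_image_of_injective _ hg]
    calc p 1 - 2 ≤ p (a.1 + 1) - #{a, b} := tsub_le_tsub (hp a.1) card_le_two
      _ = #(univ.map (Function.Embedding.sigmaMk
            (β := fun i : Fin t => Fin (p (i + 1))) a.1)) - #{a, b} := by simp
      _ ≤ #R := le_card_sdiff _ _
  obtain ⟨B, hBR, hB⟩ := exists_subset_card_eq hcard
  refine ⟨B, ⟨?_, hB⟩, fun c hc => ?_⟩
  · intro c hc d hd hcd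
    obtain ⟨e, he, rfl⟩ := mem_image.1 (hBR hc)
    obtain ⟨e', he', rfl⟩ := mem_image.1 (hBR hd)
    exact hGadj e he e' (fun h => hcd (h ▸ rfl)) (hmemR e' he').2.2
  · obtain ⟨e, he, rfl⟩ := mem_image.1 (hBR hc)
    exact G.mem_commonNeighbors.2 ⟨(hGadj e he a (hmemR e he).1.symm rfl).symm,
      (hGadj e he b (hmemR e he).2.1.symm hblock.symm).symm⟩

lemma isNClique_neighborFinset_of_degree_eq [Fintype V] [DecidableRel G.Adj]
    (hp : ∀ i : Fin t, p 1 ≤ p (i + 1)) (hsat : IsSat G (cliqueUnion t p)) {v x : V}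
    (hδ : G.degree v = p 1 - 2) (hxv : x ≠ v) (hvx : ¬ G.Adj v x) :
    G.IsNClique (p 1 - 2) (G.neighborFinset v) ∧ ∀ y ∈ G.neighborFinset v, G.Adj x y := by
  obtain ⟨B, hB, hBvx⟩ := exists_isNClique_subset_commonNeighbors hp hsat hxv.symm hvx
  have hBv : B ⊆ G.neighborFinset v := fun b hb =>
    (mem_neighborFinset ..).2 (G.mem_commonNeighbors.1 (hBvx hb)).1
  obtain rfl : B = G.neighborFinset v :=
    eq_of_subset_of_card_le hBv (by rw [card_neighborFinset_eq_degree, hδ, hB.card_eq])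
  exact ⟨hB, fun y hy => (G.mem_commonNeighbors.1 (hBvx hy)).2⟩

lemma sum_degrees_ge_of_forall_le_card_inter [Fintype V] [DecidableEq V] [DecidableRel G.Adj]
    {v : V} {q : ℕ} {B : Finset V} (hmin : ∀ x, G.degree v ≤ G.degree x)
    (hcommon : ∀ x, x ≠ v → ¬ G.Adj v x → q ≤ #(G.neighborFinset v ∩ G.neighborFinset x))
    (hB : G.IsNClique q B) (hBv : B ⊆ G.neighborFinset v) :
    (Fintype.card V - 1 - G.degree v) * (G.degree v + q) + 2 * G.degree v + q * (q - 1)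
      ≤ ∑ x, G.degree x := by
  set S := G.neighborFinset v
  set Z := univ \ insert v S
  have hvS : v ∉ S := by simp [S]
  have hsplit (φ : V → ℕ) : ∑ x, φ x = ∑ x ∈ Z, φ x + (φ v + ∑ x ∈ S, φ x) := by
    rw [← sum_sdiff (subset_univ (insert v S)), sum_insert hvS]
  have hZ : #Z = Fintype.card V - 1 - G.degree v := by
    rw [card_sdiff_of_subset (subset_univ _), card_univ, card_insert_of_notMem hvS,
      card_neighborFinset_eq_degree]
    omega
  have hdouble : ∑ y ∈ S, G.degree y = ∑ x, #(S ∩ G.neighborFinset x) := by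
    convert sum_card_bipartiteAbove_eq_sum_card_bipartiteBelow (s := S) (t := univ) (r := G.Adj)
      using 2 with y - x -
    · rw [← card_neighborFinset_eq_degree, neighborFinset_eq_filter]
      rfl
    · congr 1
      ext y
      simp [bipartiteBelow, adj_comm]
  have hZdeg : #Z * G.degree v ≤ ∑ x ∈ Z, G.degree x := by
    simpa using card_nsmul_le_sum Z _ _ fun x _ => hmin x
  have hZS : #Z * q ≤ ∑ x ∈ Z, #(S ∩ G.neighborFinset x) := by
    refine (smul_eq_mul _ _).symm.le.trans (card_nsmul_le_sum Z _ _ fun x hx => ?_)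
    simp only [Z, mem_sdiff, mem_univ, true_and, mem_insert, not_or] at hx
    exact hcommon x hx.1 (by simpa [S] using hx.2)
  have hSS : q * (q - 1) ≤ ∑ y ∈ S, #(S ∩ G.neighborFinset y) :=
    calc q * (q - 1) = ∑ y ∈ B, #(B.erase y) := by
          rw [sum_congr rfl fun y hy => card_erase_of_mem hy, sum_const, hB.card_eq, smul_eq_mul]
      _ ≤ ∑ y ∈ B, #(S ∩ G.neighborFinset y) := sum_le_sum fun y hy => card_le_card fun z hz =>
          mem_inter.2 ⟨hBv (mem_of_mem_erase hz), (mem_neighborFinset ..).2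
            (hB.isClique hy (mem_of_mem_erase hz) (ne_of_mem_erase hz).symm)⟩
      _ ≤ ∑ y ∈ S, #(S ∩ G.neighborFinset y) := sum_le_sum_of_subset hBv
  rw [hsplit, hdouble, hsplit, inter_self, ← hZ, card_neighborFinset_eq_degree, mul_add]
  omega

end SimpleGraph

lemma isSubgraphOf_cliqueUnion {V : Type*} {G : SimpleGraph V} {t : ℕ} {p : ℕ → ℕ}
    {T : Finset V} (hT : G.IsNClique (p 1) T)
    {f : (Σ i : Fin (t - 1), Fin (p ((i : ℕ) + 2))) → V} (hf : Function.Injective f)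
    (hfG : ∀ a b, (cliqueUnionTail t p).Adj a b → G.Adj (f a) (f b)) (hfT : ∀ a, f a ∉ T) :
    IsSubgraphOf (cliqueUnion t p) G := by
  classical
  let e : Fin (p 1) ≃ T := (T.equivFinOfCardEq hT.card_eq).symm
  -- block `i + 1` of `cliqueUnion` is block `i` of `cliqueUnionTail`
  let shift (a : Σ i : Fin t, Fin (p ((i : ℕ) + 1))) (ha : (a.1 : ℕ) ≠ 0) :
      Σ i : Fin (t - 1), Fin (p ((i : ℕ) + 2)) :=
    ⟨⟨a.1 - 1, by omega⟩, ⟨a.2, by rw [show (a.1 : ℕ) - 1 + 2 = a.1 + 1 by omega]; exact a.2.2⟩⟩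
  let F (a : Σ i : Fin t, Fin (p ((i : ℕ) + 1))) : V :=
    if ha : (a.1 : ℕ) = 0 then e ⟨a.2, by simpa [ha] using a.2.2⟩ else f (shift a ha)
  have hshift {a b} (ha hb) (h : (shift a ha).1 = (shift b hb).1) : a.1 = b.1 := by
    have := congrArg Fin.val h
    simp only [shift] at this
    omega
  have hF {a b} (hab : a.1 = b.1) (h : F a = F b) : a = b := by
    refine Sigma.fin_ext hab ?_
    by_cases ha : (a.1 : ℕ) = 0
    · have hb : (b.1 : ℕ) = 0 := hab ▸ ha
      simp only [F, ha, hb, dite_true] at h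
      exact congrArg Fin.val (e.injective (Subtype.ext h))
    · have hb : (b.1 : ℕ) ≠ 0 := hab ▸ ha
      simp only [F, ha, hb, dite_false] at h
      exact congrArg (fun c => (c.2 : ℕ)) (hf h)
  refine ⟨F, fun a b h => hF ?_ h, fun a b ⟨hne, hab⟩ => ?_⟩
  · by_cases ha : (a.1 : ℕ) = 0 <;> by_cases hb : (b.1 : ℕ) = 0
    · exact Fin.ext (ha.trans hb.symm)
    · simp only [F, ha, hb, dite_true, dite_false] at h
      exact absurd (h ▸ (e _).2) (hfT _)
    · simp only [F, ha, hb, dite_true, dite_false] at h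
      exact absurd (h ▸ (e _).2) (hfT _)
    · simp only [F, ha, hb, dite_false] at h
      exact hshift ha hb (congrArg Sigma.fst (hf h))
  · have hFne : F a ≠ F b := fun h => hne (hF hab h)
    by_cases ha : (a.1 : ℕ) = 0
    · have hb : (b.1 : ℕ) = 0 := hab ▸ ha
      simp only [F, ha, hb, dite_true] at hFne ⊢
      exact hT.isClique (e _).2 (e _).2 hFne
    · have hb : (b.1 : ℕ) ≠ 0 := hab ▸ ha
      simp only [F, ha, hb, dite_false] at hFne ⊢
      exact hfG _ _ ⟨fun h => hFne (congrArg f h), Fin.ext (by simp [shift, hab])⟩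

instance (p : ℕ → ℕ) (i : ℕ) : DecidablePred (inBlock p i) :=
  fun _ => inferInstanceAs (Decidable (_ ∧ _))

lemma card_filter_inBlock_le (n : ℕ) (p : ℕ → ℕ) (i : ℕ) :
    #{x : Fin n | inBlock p i x} ≤ p i + 1 := by
  calc #{x : Fin n | inBlock p i x}
      ≤ #(Ico (blockStart p i) (blockStart p i + (p i + 1))) :=
        card_le_card_of_injOn Fin.val (fun x hx => mem_Ico.2 (mem_filter.1 hx).2)
          Fin.val_injective.injOn
    _ = p i + 1 := by simp

-- A vertex of the `K_{p₁-2}` part has degree at most `n - 1`; any other vertex is adjacent only to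
-- that part and to the other vertices of its own blocks.
lemma degree_Hgraph_le (n t : ℕ) (p : ℕ → ℕ) [DecidableRel (Hgraph n t p).Adj] (x : Fin n) :
    (Hgraph n t p).degree x ≤ (if (x : ℕ) < p 1 - 2 then n - 1 - (p 1 - 2) else 0) + (p 1 - 2)
      + ∑ i ∈ Icc 2 t with inBlock p i x, p i := by
  split_ifs with hx
  · have := (Hgraph n t p).degree_lt_card_verts x
    rw [Fintype.card_fin] at this
    omega
  · have hsub : (Hgraph n t p).neighborFinset x ⊆
        ({y : Fin n | (y : ℕ) < p 1 - 2} : Finset (Fin n)) ∪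
          {i ∈ Icc 2 t | inBlock p i x}.biUnion
            fun i => ({y : Fin n | inBlock p i y} : Finset (Fin n)).erase x := by
      intro y hy
      rw [mem_neighborFinset] at hy
      simp only [Hgraph, fromRel_adj] at hy
      simp only [mem_union, mem_filter, mem_univ, true_and, mem_biUnion, mem_Icc, mem_erase]
      grind
    rw [← card_neighborFinset_eq_degree, zero_add]
    refine (card_le_card hsub).trans ((card_union_le _ _).trans (add_le_add
      (Fin.card_filter_val_lt.trans_le (min_le_right _ _))
      (card_biUnion_le.trans (sum_le_sum fun i hi => ?_))))
    have := card_filter_inBlock_le n p i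
    rw [card_erase_of_mem (by simpa using (mem_filter.1 hi).2)]
    omega

lemma two_mul_ncard_edgeSet_Hgraph_add_le {n t : ℕ} {p : ℕ → ℕ} (hn : p 1 - 2 < n) :
    2 * (Hgraph n t p).edgeSet.ncard + (p 1 - 2) * (p 1 - 2 + 1)
      ≤ 2 * (p 1 - 2) * n + ∑ i ∈ Icc 2 t, p i * (p i + 1) := by
  classical
  set q := p 1 - 2
  have hblocks : ∑ x : Fin n, ∑ i ∈ Icc 2 t with inBlock p i x, p i
      = ∑ i ∈ Icc 2 t, #{x : Fin n | inBlock p i x} * p i := by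
    simp only [sum_filter]
    rw [sum_comm]
    simp [← sum_filter, sum_const]
  have hdeg : ∑ x, (Hgraph n t p).degree x
      ≤ q * (n - 1 - q) + n * q + ∑ i ∈ Icc 2 t, p i * (p i + 1) := by
    calc ∑ x, (Hgraph n t p).degree x
        ≤ ∑ x : Fin n, ((if (x : ℕ) < q then n - 1 - q else 0) + q
            + ∑ i ∈ Icc 2 t with inBlock p i x, p i) :=
          sum_le_sum fun x _ => degree_Hgraph_le n t p x
      _ = q * (n - 1 - q) + n * q + ∑ i ∈ Icc 2 t, #{x : Fin n | inBlock p i x} * p i := by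
          simp [sum_add_distrib, sum_ite, hblocks, Fin.card_filter_val_lt, hn.le]
      _ ≤ _ := Nat.add_le_add_left (sum_le_sum fun i _ => by
            rw [mul_comm]
            exact Nat.mul_le_mul_left _ (card_filter_inBlock_le n p i)) _
  have hq : q * (n - 1 - q) + n * q + q * (q + 1) = 2 * q * n :=
    calc _ = q * (n - 1 - q + (q + 1)) + n * q := by ring
      _ = 2 * q * n := by rw [show n - 1 - q + (q + 1) = n by omega]; ring
  rw [← sum_degrees_eq_two_mul_ncard_edgeSet]
  omega

lemma le_of_degree_count {n q P δ E : ℕ} (hδn : δ < n) (hmin : n * δ ≤ E)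
    (hcount : (n - 1 - δ) * (δ + q) + 2 * δ + q * (q - 1) ≤ E)
    (hext : E + q * (q + 1) ≤ 2 * q * n + P) (hn : 3 * q + P < n) (hP : q + 2 ≤ P) :
    δ ≤ q := by
  -- `hmin` rules out `δ > 2q`; for `q < δ ≤ 2q`, `hcount` contradicts `hext` since `n > 3q + P`
  by_contra! hq
  obtain ⟨m, rfl⟩ : ∃ m, n = δ + 1 + m := ⟨n - (δ + 1), by omega⟩
  have hδ : δ ≤ 2 * q := by nlinarith
  rcases q with _ | q
  · nlinarith
  · simp only [show δ + 1 + m - 1 - δ = m by omega, Nat.add_sub_cancel] at hcount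
    nlinarith

lemma degree_eq_of_isSat {n t : ℕ} {p : ℕ → ℕ} {G : SimpleGraph (Fin n)} [DecidableRel G.Adj]
    (ht : 2 ≤ t) (hp1 : 2 ≤ p 1) (hp : ∀ i : Fin t, p 1 ≤ p (i + 1))
    (hn : 3 * (p 1 - 2) + ∑ i ∈ Icc 2 t, p i * (p i + 1) < n)
    (hsat : IsSat G (cliqueUnion t p)) (hE : G.edgeSet.ncard ≤ (Hgraph n t p).edgeSet.ncard)
    {v w : Fin n} (hmin : ∀ x, G.degree v ≤ G.degree x) (hwv : w ≠ v) (hvw : ¬ G.Adj v w) :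
    G.degree v = p 1 - 2 := by
  classical
  have hP : p 1 - 2 + 2 ≤ ∑ i ∈ Icc 2 t, p i * (p i + 1) :=
    calc p 1 - 2 + 2 ≤ p 2 * (p 2 + 1) := by
          have := hp ⟨1, by omega⟩
          rw [Nat.sub_add_cancel hp1]
          nlinarith
      _ ≤ _ := single_le_sum (f := fun i => p i * (p i + 1)) (fun _ _ => Nat.zero_le _)
          (mem_Icc.2 ⟨le_rfl, ht⟩)
  have hcommon (x : Fin n) (hxv : x ≠ v) (hvx : ¬ G.Adj v x) :
      ∃ B : Finset (Fin n),
        G.IsNClique (p 1 - 2) B ∧ B ⊆ G.neighborFinset v ∩ G.neighborFinset x := by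
    obtain ⟨B, hB, hBvx⟩ := exists_isNClique_subset_commonNeighbors hp hsat hxv.symm hvx
    exact ⟨B, hB, fun b hb => by simpa [mem_commonNeighbors] using hBvx hb⟩
  obtain ⟨B, hB, hBvw⟩ := hcommon w hwv hvw
  have hBv : B ⊆ G.neighborFinset v := hBvw.trans inter_subset_left
  have hq : p 1 - 2 ≤ G.degree v := by
    simpa [hB.card_eq] using card_le_card hBv
  have hcount := sum_degrees_ge_of_forall_le_card_inter hmin (fun x hxv hvx => by
      obtain ⟨B', hB', hB'vx⟩ := hcommon x hxv hvx
      simpa [hB'.card_eq] using card_le_card hB'vx) hB hBv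
  have hext := two_mul_ncard_edgeSet_Hgraph_add_le (n := n) (t := t) (p := p) (by omega)
  have hdeg := sum_degrees_eq_two_mul_ncard_edgeSet (G := G)
  have hminsum : n * G.degree v ≤ ∑ x, G.degree x := by
    simpa using card_nsmul_le_sum univ _ _ fun x _ => hmin x
  rw [Fintype.card_fin] at hcount
  exact le_antisymm (le_of_degree_count (G.degree_lt_card_verts v |>.trans_eq
    (Fintype.card_fin n)) hminsum hcount (by omega) hn hP) hq

/-- Any vertex outside `S ∪ {v}` adjacent to `w` must lie in `V(H_{vw})`. -/
theorem adj_mem_copy (n t : ℕ) (p : ℕ → ℕ) (ht : 2 ≤ t) (hp1 : 2 ≤ p 1)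
    (hmono : ∀ i j, 1 ≤ i → i ≤ j → j ≤ t → p i ≤ p j)
    (hn : 3 * (p 1 - 2) + ∑ i ∈ Finset.Icc 2 t, p i * (p i + 1) < n)
    (G : SimpleGraph (Fin n)) (hsat : IsSat G (cliqueUnion t p))
    (hE : G.edgeSet.ncard ≤ (Hgraph n t p).edgeSet.ncard)
    (v : Fin n)
    (hmin : ∀ u, (G.neighborSet v).ncard ≤ (G.neighborSet u).ncard)
    (w : Fin n) (hw : w ∉ G.neighborSet v ∪ {v})
    (f : (Σ i : Fin (t - 1), Fin (p ((i : ℕ) + 2))) → Fin n)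
    (hfinj : Function.Injective f)
    (hfhom : ∀ a b, (cliqueUnionTail t p).Adj a b → G.Adj (f a) (f b))
    (hfav : ∀ a, f a ∉ G.neighborSet v ∪ {v, w}) :
    ∀ u : Fin n, u ∉ G.neighborSet v ∪ {v} → G.Adj u w → u ∈ Set.range f := by
  classical
  intro u hu huw
  by_contra hu'
  have hp : ∀ i : Fin t, p 1 ≤ p (i + 1) := fun i => hmono 1 _ le_rfl (by omega) (by omega)
  simp only [Set.mem_union, mem_neighborSet, Set.mem_singleton_iff, not_or] at hu hw
  have hδ : G.degree v = p 1 - 2 := degree_eq_of_isSat ht hp1 hp hn hsat hE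
    (fun x => by simpa only [ncard_neighborSet_eq_degree] using hmin x) hw.2 hw.1
  obtain ⟨hS, hwS⟩ := isNClique_neighborFinset_of_degree_eq hp hsat hδ hw.2 hw.1
  obtain ⟨-, huS⟩ := isNClique_neighborFinset_of_degree_eq hp hsat hδ hu.2 hu.1
  have hT : G.IsNClique (p 1) (insert u (insert w (G.neighborFinset v))) := by
    rw [show p 1 = p 1 - 2 + 1 + 1 by omega]
    exact (hS.insert hwS).insert ((forall_mem_insert _ _ _).2 ⟨huw, huS⟩)
  refine hsat.1 (isSubgraphOf_cliqueUnion hT hfinj hfhom fun a ha => ?_)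
  rcases mem_insert.1 ha with h | h
  · exact hu' ⟨a, h⟩
  · exact hfav a (by simp at h ⊢; tauto)
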